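/- Let G₄ = ⟨x, y, z : [x,y]=1, zxz⁻¹ = y, zyz⁻¹ = x⁻¹⟩ and let Γ = ⟨x, y⟩ ≅ Z². If Δ ≤ G₄ is a subgroup of finite index such that the minimal positive exponent a of z occurring among canonical forms of elements of Δ is odd, then Δ ∩ Γ is a normal subgroup of G₄. -/

import Mathlib

/-- The relations of `G₄ = ⟨x, y, z : xyx⁻¹y⁻¹ = 1, zxz⁻¹ = y, zyz⁻¹ = x⁻¹⟩`,
with `x, y, z` being the generators `0, 1, 2 : Fin 3`. -/
def relsG4 : Set (FreeGroup (Fin 3)) :=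
  { FreeGroup.of 0 * FreeGroup.of 1 * (FreeGroup.of 0)⁻¹ * (FreeGroup.of 1)⁻¹,
    FreeGroup.of 2 * FreeGroup.of 0 * (FreeGroup.of 2)⁻¹ * (FreeGroup.of 1)⁻¹,
    FreeGroup.of 2 * FreeGroup.of 1 * (FreeGroup.of 2)⁻¹ * FreeGroup.of 0 }

/-- The fundamental group `G₄ = π₁(𝒢₄)`. -/
abbrev G4 : Type := PresentedGroup relsG4

/-- The generator `x` of `G₄`. -/
def X : G4 := PresentedGroup.of 0
/-- The generator `y` of `G₄`. -/
def Y : G4 := PresentedGroup.of 1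
/-- The generator `z` of `G₄`. -/
def Z : G4 := PresentedGroup.of 2


/-!
Let `N` be the normalizer of `Δ ⊓ Γ`. Since `Γ` is abelian, `Γ ≤ N`. An element `u zᵃ ∈ Δ` with
`u ∈ Γ` normalizes both `Δ` and the normal subgroup `Γ`, so `zᵃ ∈ N`. Conjugation by `z` acts on
`Γ ≅ ℤ²` as a rotation of order four, so `z⁴` centralizes `Γ` and lies in `N`. As `a` is odd,
`z` is a combination of `zᵃ` and `z⁴`, hence `x, y, z ∈ N` and `N = G₄`.
-/

open Subgroup

theorem Subgroup.mem_of_zpow_mem_of_isCoprime {G : Type*} [Group G] {H : Subgroup G} {g : G}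
    {m n : ℤ} (hm : g ^ m ∈ H) (hn : g ^ n ∈ H) (hmn : IsCoprime m n) : g ∈ H := by
  obtain ⟨u, v, huv⟩ := hmn
  have hg : g = (g ^ m) ^ u * (g ^ n) ^ v := by
    rw [← zpow_mul, ← zpow_mul, ← zpow_add, mul_comm m, mul_comm n, huv, zpow_one]
  rw [hg]
  exact mul_mem (zpow_mem hm u) (zpow_mem hn v)

theorem Subgroup.centralizer_le_normalizer_inf {G : Type*} [Group G] (H K : Subgroup G) :
    centralizer K ≤ normalizer ((H ⊓ K : Subgroup G) : Set G) :=
  (centralizer_le inf_le_right).trans (centralizer_le_normalizer _)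

theorem Int.isCoprime_four_of_odd {a : ℤ} (ha : Odd a) : IsCoprime a 4 := by
  obtain ⟨k, rfl⟩ := ha
  exact ⟨2 * k + 1, -(k ^ 2 + k), by ring⟩

namespace G4

def Γ : Subgroup G4 := closure {X, Y}

theorem X_mem_Γ : X ∈ Γ := subset_closure (by simp)

theorem Y_mem_Γ : Y ∈ Γ := subset_closure (by simp)

theorem X_mul_Y : X * Y = Y * X :=
  PresentedGroup.mk_eq_mk_of_mul_inv_mem (by simp only [mul_inv_rev, ← mul_assoc]; simp [relsG4])

theorem conj_Z_X : MulAut.conj Z X = Y :=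
  PresentedGroup.mk_eq_mk_of_mul_inv_mem (by simp [relsG4])

theorem conj_Z_Y : MulAut.conj Z Y = X⁻¹ :=
  PresentedGroup.mk_eq_mk_of_mul_inv_mem (by simp [relsG4])

theorem eq_top_of_X_mem_of_Y_mem_of_Z_mem {H : Subgroup G4} (hX : X ∈ H) (hY : Y ∈ H)
    (hZ : Z ∈ H) : H = ⊤ := by
  refine eq_top_iff.2 fun g _ ↦ PresentedGroup.generated_by relsG4 H (fun j ↦ ?_) g
  fin_cases j
  exacts [hX, hY, hZ]

theorem Γ_le_centralizer_Γ : Γ ≤ centralizer Γ := by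
  rw [Γ, centralizer_closure, closure_le]
  simp [Set.insert_subset_iff, mem_centralizer_iff, X_mul_Y]

theorem map_conj_Z_Γ : Γ.map (MulAut.conj Z) = Γ := by
  rw [Γ, MonoidHom.map_closure]
  simp only [MonoidHom.coe_coe, Set.image_insert_eq, Set.image_singleton, conj_Z_X, conj_Z_Y]
  apply le_antisymm <;> rw [closure_le, Set.insert_subset_iff, Set.singleton_subset_iff]
  · exact ⟨subset_closure (by simp), inv_mem (subset_closure (by simp))⟩
  · exact ⟨inv_mem_iff.1 (subset_closure (by simp)), subset_closure (by simp)⟩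

instance : Γ.Normal := by
  refine normalizer_eq_top_iff.mp (eq_top_of_X_mem_of_Y_mem_of_Z_mem ?_ ?_ ?_)
  · exact le_normalizer X_mem_Γ
  · exact le_normalizer Y_mem_Γ
  · exact mem_normalizer_iff_map_conj_eq.2 map_conj_Z_Γ

theorem conj_Z_pow_four_X : MulAut.conj (Z ^ 4) X = X := by
  rw [map_pow]
  simp only [pow_succ, pow_zero, one_mul, MulAut.mul_apply, conj_Z_X, conj_Z_Y, map_inv, inv_inv]

theorem conj_Z_pow_four_Y : MulAut.conj (Z ^ 4) Y = Y := by
  rw [map_pow]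
  simp only [pow_succ, pow_zero, one_mul, MulAut.mul_apply, conj_Z_X, conj_Z_Y, map_inv, inv_inv]

theorem Z_pow_four_mem_centralizer_Γ : Z ^ 4 ∈ centralizer Γ := by
  rw [Γ, centralizer_closure, mem_centralizer_iff]
  rintro g (rfl | rfl)
  · exact (mul_inv_eq_iff_eq_mul.1 conj_Z_pow_four_X).symm
  · exact (mul_inv_eq_iff_eq_mul.1 conj_Z_pow_four_Y).symm

end G4

open G4 in
theorem G4_intersection_normal_general (Δ : Subgroup G4) (a : ℤ)
    (ha_odd : Odd a)
    (ha_mem : ∃ b₁ b₂ : ℤ, X ^ b₁ * Y ^ b₂ * Z ^ a ∈ Δ) :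
    (Δ ⊓ Subgroup.closure {X, Y}).Normal := by
  obtain ⟨b₁, b₂, hΔ⟩ := ha_mem
  change (Δ ⊓ Γ).Normal
  set N := normalizer ((Δ ⊓ Γ : Subgroup G4) : Set G4)
  have hΓN : Γ ≤ N := Γ_le_centralizer_Γ.trans (centralizer_le_normalizer_inf Δ Γ)
  have hu : X ^ b₁ * Y ^ b₂ ∈ Γ := mul_mem (zpow_mem X_mem_Γ b₁) (zpow_mem Y_mem_Γ b₂)
  have hZaN : Z ^ a ∈ N := by
    have h : X ^ b₁ * Y ^ b₂ * Z ^ a ∈ N :=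
      inf_normalizer_le_normalizer_inf ⟨le_normalizer hΔ, le_normalizer_of_normal (mem_top _)⟩
    simpa only [inv_mul_cancel_left] using mul_mem (inv_mem (hΓN hu)) h
  have hZ4N : Z ^ (4 : ℤ) ∈ N :=
    centralizer_le_normalizer_inf Δ Γ (by exact_mod_cast Z_pow_four_mem_centralizer_Γ)
  have hZN : Z ∈ N := mem_of_zpow_mem_of_isCoprime hZaN hZ4N (Int.isCoprime_four_of_odd ha_odd)
  exact normalizer_eq_top_iff.mp (eq_top_of_X_mem_of_Y_mem_of_Z_mem (hΓN X_mem_Γ) (hΓN Y_mem_Γ) hZN)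

/-- Let `Γ = ⟨x, y⟩ ≤ G₄`. If `Δ ≤ G₄` has finite index and the minimal positive exponent
`a` of `z` occurring among the canonical forms `xᵇ¹yᵇ²z^c` of elements of `Δ` is odd,
then `Δ ∩ Γ` is normal in `G₄`. -/
theorem G4_intersection_normal (Δ : Subgroup G4) (hfin : Δ.index ≠ 0) (a : ℤ)
    (ha_pos : 0 < a) (ha_odd : Odd a)
    (ha_mem : ∃ b₁ b₂ : ℤ, X ^ b₁ * Y ^ b₂ * Z ^ a ∈ Δ)
    (ha_min : ∀ c : ℤ, 0 < c → (∃ b₁ b₂ : ℤ, X ^ b₁ * Y ^ b₂ * Z ^ c ∈ Δ) → a ≤ c) :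
    (Δ ⊓ Subgroup.closure {X, Y}).Normal :=
  G4_intersection_normal_general Δ a ha_odd ha_mem
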